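/- arXiv:0802.3278 — 4 statements merged into one kernel-verified Lean document; each statement's English description precedes it below -/
import Mathlib

section
/- For any real numbers ξ₁,…,ξ_k and any positive integer N, there exist integers q, p₁,…,p_k such that |qξ_i − p_i| ≤ N^{-1} for all i and 0 < |q| ≤ N^k. -/
/-!
Pigeonhole: cut `[0,1)^k` into `N^k` cubes of side `1/N`. Among the `N^k + 1` points
`(fract (q ξ₁), …, fract (q ξₖ))`, `q = 0, …, N^k`, two lie in the same cube, say for `a ≠ b`;
then `q = b - a` and `pᵢ = ⌊b ξᵢ⌋ - ⌊a ξᵢ⌋` do the job.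
-/

open Finset

lemma abs_sub_lt_inv_of_floor_mul_eq {N a b : ℝ} (hN : 0 < N) (h : ⌊N * a⌋ = ⌊N * b⌋) :
    |a - b| < N⁻¹ := by
  have h₁ : |N * a - N * b| < 1 := Int.abs_sub_lt_one_of_floor_eq_floor h
  rw [← mul_sub, abs_mul, abs_of_pos hN] at h₁
  rwa [← one_div, lt_div_iff₀' hN]

lemma floor_mul_fract_mem_Ico {N : ℕ} (hN : 0 < N) (x : ℝ) :
    ⌊(N : ℝ) * Int.fract x⌋ ∈ Ico (0 : ℤ) N := by
  have hN' : (0 : ℝ) < N := by exact_mod_cast hN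
  rw [mem_Ico, Int.floor_nonneg, Int.floor_lt, Int.cast_natCast]
  exact ⟨by positivity, mul_lt_of_lt_one_right hN' (Int.fract_lt_one x)⟩

noncomputable def fractCube {ι : Type*} (N : ℕ) (ξ : ι → ℝ) (q : ℕ) : ι → ℤ :=
  fun i ↦ ⌊(N : ℝ) * Int.fract (q * ξ i)⌋

lemma exists_ne_fractCube_eq {ι : Type*} [Fintype ι] {N : ℕ} (hN : 0 < N)
    (ξ : ι → ℝ) :
    ∃ a ∈ range (N ^ Fintype.card ι + 1), ∃ b ∈ range (N ^ Fintype.card ι + 1),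
      a ≠ b ∧ fractCube N ξ a = fractCube N ξ b := by
  classical
  have hcard :
      #(Fintype.piFinset fun _ : ι ↦ Ico (0 : ℤ) N) < #(range (N ^ Fintype.card ι + 1)) := by
    simp
  exact exists_ne_map_eq_of_card_lt_of_maps_to hcard fun q _ ↦
    Fintype.mem_piFinset.2 fun i ↦ floor_mul_fract_mem_Ico hN _

theorem dirichlet_simultaneous_general (k : ℕ) (ξ : Fin k → ℝ)
    (N : ℕ) (hN : 0 < N) :
    ∃ (q : ℤ) (p : Fin k → ℤ),
      (∀ i, |(q : ℝ) * ξ i - (p i : ℝ)| ≤ (N : ℝ)⁻¹) ∧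
      q ≠ 0 ∧ |q| ≤ (N : ℤ) ^ k := by
  obtain ⟨a, ha, b, hb, hab, hcube⟩ := exists_ne_fractCube_eq hN ξ
  rw [Fintype.card_fin, mem_range, Nat.lt_succ_iff] at ha hb
  zify at ha hb
  refine ⟨b - a, fun i ↦ ⌊(b : ℝ) * ξ i⌋ - ⌊(a : ℝ) * ξ i⌋, fun i ↦ ?_, by omega, ?_⟩
  · have h := abs_sub_lt_inv_of_floor_mul_eq (by exact_mod_cast hN) (congrFun hcube i).symm
    calc |((b - a : ℤ) : ℝ) * ξ i - ((⌊(b : ℝ) * ξ i⌋ - ⌊(a : ℝ) * ξ i⌋ : ℤ) : ℝ)|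
        = |Int.fract ((b : ℝ) * ξ i) - Int.fract ((a : ℝ) * ξ i)| := by
          rw [Int.fract, Int.fract]; push_cast; congr 1; ring
      _ ≤ (N : ℝ)⁻¹ := h.le
  · rw [abs_le]
    constructor <;> omega

/-- Dirichlet's theorem on simultaneous Diophantine approximation:
for any `ξ₁, …, ξ_k ∈ ℝ` and any positive integer `N` there are integers
`q, p₁, …, p_k` with `|qξᵢ − pᵢ| ≤ N⁻¹` for all `i` and `0 < |q| ≤ N^k`. -/
theorem dirichlet_simultaneous (k : ℕ) (hk : 0 < k) (ξ : Fin k → ℝ)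
    (N : ℕ) (hN : 0 < N) :
    ∃ (q : ℤ) (p : Fin k → ℤ),
      (∀ i, |(q : ℝ) * ξ i - (p i : ℝ)| ≤ (N : ℝ)⁻¹) ∧
      q ≠ 0 ∧ |q| ≤ (N : ℤ) ^ k :=
  dirichlet_simultaneous_general k ξ N hN
end

section
/- Let W be a finite-dimensional irreducible representation of an sl₂-triple (X,H,Y) (i.e. [X,Y]=H, [H,X]=2X, [H,Y]=−2Y). Let W⁻ be the sum of strictly negative eigenspaces of H and W⁺ the sum of strictly positive eigenspaces, and let π₊: W → W⁺ be the projection parallel to the eigenspaces of H. Then for any nonzero v ∈ W⁻ one has π₊(exp(X)·v) ≠ 0. -/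
/-!
Take a highest weight vector `w₀` of weight `n`. The vectors `bᵢ = (n - i)! • Yⁱ w₀` form a basis
of `W` in which `H bᵢ = (n - 2i) bᵢ` and `X bᵢ = i bᵢ₋₁`. Sending `bᵢ ↦ tⁱ` identifies `W` with the
polynomials of degree `≤ n`, `X` with `d/dt` and `exp X` with the shift `p(t) ↦ p(t + 1)`.
A vector of `W⁻` is a polynomial `p` divisible by `t ^ (⌊n/2⌋ + 1)`; if `π₊ (exp X p) = 0` then
`t ^ ⌈n/2⌉` divides `p(t + 1)`, i.e. `(t - 1) ^ ⌈n/2⌉` divides `p`. As `t` and `t - 1` are coprime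
and `⌊n/2⌋ + 1 + ⌈n/2⌉ = n + 1 > deg p`, this forces `p = 0`.
-/

/-- The exponential of an endomorphism `X` of a finite-dimensional space,
as the finite sum `∑_{i < n} X^i / i!`; this equals `exp X` whenever `X^n = 0`
(in particular for nilpotent `X` of an `n`-dimensional space). -/
noncomputable def expNil {W : Type*} [AddCommGroup W] [Module ℝ W]
    (n : ℕ) (X : Module.End ℝ W) : Module.End ℝ W :=
  ∑ i ∈ Finset.range n, ((i.factorial : ℝ)⁻¹) • X ^ i

namespace Polynomial

variable {R : Type*} [CommRing R]

theorem taylor_eq_sum_smul_hasseDeriv (r : R) {p : R[X]} {N : ℕ} (hp : p.natDegree < N) :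
    taylor r p = ∑ i ∈ Finset.range N, r ^ i • hasseDeriv i p := by
  conv_lhs => rw [p.as_sum_range' N hp]
  conv_rhs => rw [p.as_sum_range' N hp]
  simp only [map_sum, Finset.smul_sum]
  rw [Finset.sum_comm]
  refine Finset.sum_congr rfl fun k hk => ?_
  rw [taylor_monomial, add_comm, add_pow, Finset.mul_sum]
  rw [← Finset.sum_subset (Finset.range_subset_range.mpr (Finset.mem_range.mp hk))
    fun i _ hi => by simp [Nat.choose_eq_zero_of_lt (by simpa using hi)]]
  refine Finset.sum_congr rfl fun i _ => ?_
  rw [hasseDeriv_monomial, ← C_mul_X_pow_eq_monomial, smul_eq_C_mul]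
  simp only [C_pow, C_mul, map_natCast]
  ring

theorem eq_zero_of_X_pow_dvd_of_X_pow_dvd_taylor [IsDomain R] {r : R} (hr : IsUnit r)
    {p : R[X]} {a b : ℕ} (hdeg : p.natDegree < a + b) (ha : X ^ a ∣ p)
    (hb : X ^ b ∣ taylor r p) : p = 0 := by
  have hb' : (X - C r) ^ b ∣ p := by
    obtain ⟨q, hq⟩ := hb
    refine ⟨taylor (-r) q, ?_⟩
    rw [← taylor_zero p, ← neg_add_cancel r, ← taylor_taylor, hq, taylor_mul, taylor_pow,
      taylor_X, map_neg, ← sub_eq_add_neg]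
  have hcop : IsCoprime (X ^ a) ((X - C r) ^ b : R[X]) := by
    refine IsCoprime.pow ?_
    simpa using isCoprime_X_sub_C_of_isUnit_sub (R := R) (a := 0) (b := r) (by simpa using hr.neg)
  by_contra hp
  have hle := natDegree_le_of_dvd (hcop.mul_dvd ha hb') hp
  rw [(monic_X_pow a).natDegree_mul ((monic_X_sub_C r).pow b), natDegree_X_pow,
    natDegree_pow, natDegree_X_sub_C, mul_one] at hle
  omega

end Polynomial

namespace Module.End

variable {R M : Type*} [CommRing R] [AddCommGroup M] [Module R M] {f : Module.End R M}

theorem HasEigenvalue.ne_zero [IsDomain R] [IsTorsionFree R M] {μ : R} (hμ : f.HasEigenvalue μ)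
    (hμ0 : μ ≠ 0) : f ≠ 0 := by
  rintro rfl
  obtain ⟨u, hu⟩ := hμ.exists_hasEigenvector
  exact hu.2 ((smul_eq_zero.mp hu.apply_eq_smul.symm).resolve_left hμ0)

theorem exists_hasEigenvalue_of_mem_iSup_eigenspace {S : Set R} {v : M}
    (hv : v ∈ ⨆ μ ∈ S, f.eigenspace μ) (hv0 : v ≠ 0) : ∃ μ ∈ S, f.HasEigenvalue μ := by
  by_contra! h
  have hbot : (⨆ μ ∈ S, f.eigenspace μ) = ⊥ :=
    iSup₂_eq_bot.mpr fun μ hμ => not_ne_iff.mp (hasEigenvalue_iff.not.mp (h μ hμ))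
  rw [hbot] at hv
  exact hv0 ((Submodule.mem_bot R).mp hv)

end Module.End

section Sl2

attribute [local instance] LieRing.ofAssociativeRing

variable {K W : Type*} [Field K] [AddCommGroup W] [Module K W] {X H Y : Module.End K W}

namespace IsSl2Triple

theorem exists_hasPrimitiveVectorWith_of_hasEigenvalue [LinearOrder K] [IsStrictOrderedRing K]
    [FiniteDimensional K W] (t : IsSl2Triple H X Y) {μ : K} (hμ : H.HasEigenvalue μ) :
    ∃ (m : W) (ν : K), t.HasPrimitiveVectorWith m ν := by
  -- `X` raises eigenvalues by `2`, so it kills the eigenvectors of the largest eigenvalue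
  obtain ⟨ν, hν, hmax⟩ := Set.exists_max_image {μ | H.HasEigenvalue μ} id
    H.finite_hasEigenvalue ⟨μ, hμ⟩
  obtain ⟨m, hm⟩ := Module.End.HasEigenvalue.exists_hasEigenvector hν
  have hHm : ⁅H, m⁆ = ν • m := hm.apply_eq_smul
  refine ⟨m, ν, hm.2, hHm, ?_⟩
  by_contra hXm
  have hHXm := t.lie_h_pow_toEnd_e hHm 1
  simp only [LieModule.toEnd_module_end, pow_one, LieHom.id_apply, Module.End.lie_apply,
    Nat.cast_one, mul_one] at hHXm hXm
  have : ν + 2 ≤ ν := hmax (ν + 2) (Module.End.hasEigenvalue_of_hasEigenvector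
    ⟨Module.End.mem_eigenspace_iff.mpr hHXm, hXm⟩)
  linarith

namespace HasPrimitiveVectorWith

variable {t : IsSl2Triple H X Y} {m : W} {n : ℕ}

theorem h_apply_pow_f_apply (P : t.HasPrimitiveVectorWith m (n : K)) (k : ℕ) :
    H ((Y ^ k) m) = ((n : K) - 2 * k) • (Y ^ k) m := by
  simpa [LieModule.toEnd_module_end] using P.lie_h_pow_toEnd_f k

theorem e_apply_pow_succ_f_apply (P : t.HasPrimitiveVectorWith m (n : K)) (k : ℕ) :
    X ((Y ^ (k + 1)) m) = (((k : K) + 1) * ((n : K) - k)) • (Y ^ k) m := by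
  simpa [LieModule.toEnd_module_end] using P.lie_e_pow_succ_toEnd_f k

variable [CharZero K]

theorem pow_f_apply_ne_zero (P : t.HasPrimitiveVectorWith m (n : K)) {k : ℕ} (hk : k ≤ n) :
    (Y ^ k) m ≠ 0 := by
  simpa [LieModule.toEnd_module_end] using P.pow_toEnd_f_ne_zero_of_eq_nat rfl hk

theorem pow_f_apply_eq_zero [FiniteDimensional K W] (P : t.HasPrimitiveVectorWith m (n : K)) :
    (Y ^ (n + 1)) m = 0 := by
  simpa [LieModule.toEnd_module_end] using P.pow_toEnd_f_eq_zero_of_eq_nat rfl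

theorem linearIndependent (P : t.HasPrimitiveVectorWith m (n : K)) :
    LinearIndependent K fun i : Fin (n + 1) => (Y ^ (i : ℕ)) m := by
  refine H.eigenvectors_linearIndependent' (fun i : Fin (n + 1) => (n : K) - 2 * i)
    (fun i j hij => ?_) _ fun i =>
      ⟨Module.End.mem_eigenspace_iff.mpr (P.h_apply_pow_f_apply i), P.pow_f_apply_ne_zero i.is_le⟩
  exact Fin.ext (by simpa using hij)

theorem span_eq_top [FiniteDimensional K W] (P : t.HasPrimitiveVectorWith m (n : K))
    (hirr : ∀ p : Submodule K W, (∀ w ∈ p, X w ∈ p) → (∀ w ∈ p, H w ∈ p) →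
      (∀ w ∈ p, Y w ∈ p) → p = ⊥ ∨ p = ⊤) :
    Submodule.span K (Set.range fun i : Fin (n + 1) => (Y ^ (i : ℕ)) m) = ⊤ := by
  set p := Submodule.span K (Set.range fun i : Fin (n + 1) => (Y ^ (i : ℕ)) m)
  have hmem : ∀ k ≤ n + 1, (Y ^ k) m ∈ p := by
    intro k hk
    rcases hk.lt_or_eq with hk | rfl
    · exact Submodule.subset_span ⟨⟨k, hk⟩, rfl⟩
    · rw [P.pow_f_apply_eq_zero]; exact p.zero_mem
  have hinv : ∀ A : Module.End K W, (∀ k ≤ n, A ((Y ^ k) m) ∈ p) → ∀ w ∈ p, A w ∈ p := by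
    intro A hA w hw
    refine (Submodule.span_le.mpr ?_ : p ≤ p.comap A) hw
    rintro _ ⟨i, rfl⟩
    exact hA i i.is_le
  have hX : ∀ w ∈ p, X w ∈ p := hinv X fun k _ => by
    cases k with
    | zero => simp [← Module.End.lie_apply X m, P.lie_e]
    | succ k => rw [P.e_apply_pow_succ_f_apply]; exact p.smul_mem _ (hmem k (by omega))
  have hH : ∀ w ∈ p, H w ∈ p := hinv H fun k hk => by
    rw [P.h_apply_pow_f_apply]; exact p.smul_mem _ (hmem k (by omega))
  have hY : ∀ w ∈ p, Y w ∈ p := hinv Y fun k hk => by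
    rw [← Module.End.mul_apply, ← pow_succ']; exact hmem (k + 1) (by omega)
  refine (hirr p hX hH hY).resolve_left fun hbot => P.ne_zero ?_
  simpa [hbot] using hmem 0 (by omega)

theorem exists_basis [FiniteDimensional K W] (P : t.HasPrimitiveVectorWith m (n : K))
    (hirr : ∀ p : Submodule K W, (∀ w ∈ p, X w ∈ p) → (∀ w ∈ p, H w ∈ p) →
      (∀ w ∈ p, Y w ∈ p) → p = ⊥ ∨ p = ⊤) :
    ∃ b : Module.Basis (Fin (n + 1)) K W, (∀ i, H (b i) = ((n : K) - 2 * i) • b i) ∧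
      X (b 0) = 0 ∧ ∀ i : Fin n, X (b i.succ) = ((i : K) + 1) • b i.castSucc := by
  let c : Fin (n + 1) → K := fun i => ((n - i : ℕ).factorial : K)
  have hc : ∀ i, IsUnit (c i) := fun i => by simp [c, Nat.factorial_ne_zero]
  let b := (Module.Basis.mk P.linearIndependent (P.span_eq_top hirr).ge).isUnitSMul hc
  have hb : ∀ i, b i = c i • (Y ^ (i : ℕ)) m := fun i => by
    simp [b, Module.Basis.isUnitSMul_apply]
  refine ⟨b, fun i => ?_, ?_, fun i => ?_⟩
  · rw [hb, map_smul, P.h_apply_pow_f_apply, smul_comm]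
  · simp [hb, ← Module.End.lie_apply X m, P.lie_e]
  · have hfac : ((n - i : ℕ).factorial : K) =
        ((n : K) - i) * ((n - (i + 1) : ℕ).factorial : K) := by
      rw [← Nat.mul_factorial_pred (by omega : n - i ≠ 0), Nat.cast_mul, Nat.cast_sub i.is_lt.le,
        Nat.sub_sub]
    rw [hb, hb, map_smul, Fin.val_succ, P.e_apply_pow_succ_f_apply, smul_smul, smul_smul]
    congr 1
    simp only [c, Fin.val_succ, Fin.val_castSucc, hfac]
    ring

end HasPrimitiveVectorWith

theorem exists_basis_of_hasEigenvalue [LinearOrder K] [IsStrictOrderedRing K]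
    [FiniteDimensional K W] (t : IsSl2Triple H X Y)
    (hirr : ∀ p : Submodule K W, (∀ w ∈ p, X w ∈ p) → (∀ w ∈ p, H w ∈ p) →
      (∀ w ∈ p, Y w ∈ p) → p = ⊥ ∨ p = ⊤) {μ : K} (hμ : H.HasEigenvalue μ) :
    ∃ (n : ℕ) (b : Module.Basis (Fin (n + 1)) K W), (∀ i, H (b i) = ((n : K) - 2 * i) • b i) ∧
      X (b 0) = 0 ∧ ∀ i : Fin n, X (b i.succ) = ((i : K) + 1) • b i.castSucc := by
  obtain ⟨m, ν, P⟩ := t.exists_hasPrimitiveVectorWith_of_hasEigenvalue hμ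
  obtain ⟨n, rfl⟩ := P.exists_nat
  exact ⟨n, P.exists_basis hirr⟩

end IsSl2Triple

end Sl2

namespace Module.Basis

section Eigenbasis

variable {ι R M : Type*} [CommRing R] [AddCommGroup M] [Module R M] (b : Basis ι R M)
  {f : Module.End R M} {ε : ι → R}

theorem repr_apply_of_apply_eq_smul (hf : ∀ i, f (b i) = ε i • b i) (u : M) (i : ι) :
    b.repr (f u) i = ε i * b.repr u i := by
  have : b.coord i ∘ₗ f = ε i • b.coord i := b.ext fun j => by
    by_cases hji : j = i <;> simp [hf, hji]
  exact LinearMap.congr_fun this u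

theorem repr_eq_zero_of_mem_iSup_eigenspace [NoZeroDivisors R] (hf : ∀ i, f (b i) = ε i • b i)
    {S : Set R} {u : M} (hu : u ∈ ⨆ μ ∈ S, f.eigenspace μ) {i : ι} (hi : ε i ∉ S) :
    b.repr u i = 0 := by
  suffices (⨆ μ ∈ S, f.eigenspace μ) ≤ LinearMap.ker (b.coord i) from this hu
  refine iSup₂_le fun μ hμ u hu => ?_
  have h := b.repr_apply_of_apply_eq_smul hf u i
  rw [Module.End.mem_eigenspace_iff.mp hu, map_smul, Finsupp.smul_apply, smul_eq_mul,
    ← sub_eq_zero, ← sub_mul] at h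
  have hne : μ - ε i ≠ 0 := sub_ne_zero.mpr fun h => hi (h ▸ hμ)
  simpa using (mul_eq_zero.mp h).resolve_left hne

end Eigenbasis

section CoordPoly

open Polynomial

variable {R M : Type*} [CommRing R] [AddCommGroup M] [Module R M] {n : ℕ}
  (b : Basis (Fin (n + 1)) R M)

noncomputable def coordPoly : M →ₗ[R] R[X] :=
  ∑ i : Fin (n + 1), monomial (i : ℕ) ∘ₗ b.coord i

theorem coeff_coordPoly (u : M) (i : Fin (n + 1)) : (b.coordPoly u).coeff i = b.repr u i := by
  simp [coordPoly, coeff_monomial, Fin.val_inj]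

theorem natDegree_coordPoly_le (u : M) : (b.coordPoly u).natDegree ≤ n := by
  rw [coordPoly, LinearMap.sum_apply]
  exact natDegree_sum_le_of_forall_le _ _ fun i _ => (natDegree_monomial_le _).trans i.is_le

theorem coordPoly_injective : Function.Injective b.coordPoly := fun u v h =>
  b.ext_elem fun i => by rw [← coeff_coordPoly, h, coeff_coordPoly]

theorem coordPoly_self (i : Fin (n + 1)) : b.coordPoly (b i) = X ^ (i : ℕ) := by
  simp [coordPoly, Finsupp.single_apply, apply_ite (monomial _), monomial_one_right_eq_X_pow]

theorem coordPoly_comp_eq_derivative_comp {E : Module.End R M} (hE₀ : E (b 0) = 0)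
    (hE : ∀ i : Fin n, E (b i.succ) = ((i : R) + 1) • b i.castSucc) :
    b.coordPoly ∘ₗ E = derivative ∘ₗ b.coordPoly := by
  refine b.ext fun i => ?_
  cases i using Fin.cases with
  | zero => simp [hE₀, coordPoly_self]
  | succ i => simp [hE, coordPoly_self, smul_eq_C_mul]

end CoordPoly

section Exp

open Polynomial

variable {M : Type*} [AddCommGroup M] [Module ℝ M] {n : ℕ} (b : Basis (Fin (n + 1)) ℝ M)
  {E : Module.End ℝ M}

theorem coordPoly_expNil (hE₀ : E (b 0) = 0)
    (hE : ∀ i : Fin n, E (b i.succ) = ((i : ℝ) + 1) • b i.castSucc) {N : ℕ} (hN : n < N)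
    (u : M) : b.coordPoly (expNil N E u) = taylor 1 (b.coordPoly u) := by
  have hpow (i : ℕ) :
      b.coordPoly ((E ^ i) u) = (i.factorial : ℝ) • hasseDeriv i (b.coordPoly u) := by
    rw [← LinearMap.comp_apply, ← Module.End.commute_pow_left_of_commute
      (b.coordPoly_comp_eq_derivative_comp hE₀ hE).symm, LinearMap.comp_apply,
      Module.End.pow_apply, ← factorial_smul_hasseDeriv, Nat.cast_smul_eq_nsmul]
    rfl
  rw [taylor_eq_sum_smul_hasseDeriv 1 ((b.natDegree_coordPoly_le u).trans_lt hN)]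
  simp [expNil, hpow, smul_smul, Nat.factorial_ne_zero]

theorem exists_repr_expNil_ne_zero (hE₀ : E (b 0) = 0)
    (hE : ∀ i : Fin n, E (b i.succ) = ((i : ℝ) + 1) • b i.castSucc) {N : ℕ} (hN : n < N)
    {v : M} (hv0 : v ≠ 0) (hv : ∀ i : Fin (n + 1), 2 * (i : ℕ) ≤ n → b.repr v i = 0) :
    ∃ i : Fin (n + 1), 2 * (i : ℕ) < n ∧ b.repr (expNil N E v) i ≠ 0 := by
  by_contra! h
  refine hv0 (b.coordPoly_injective ?_)
  rw [map_zero]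
  refine eq_zero_of_X_pow_dvd_of_X_pow_dvd_taylor isUnit_one (a := n / 2 + 1) (b := n - n / 2)
    ?_ ?_ ?_
  · have := b.natDegree_coordPoly_le v
    omega
  · exact X_pow_dvd_iff.mpr fun d hd =>
      (b.coeff_coordPoly v ⟨d, by omega⟩).trans (hv _ (show 2 * d ≤ n by omega))
  · rw [← b.coordPoly_expNil hE₀ hE hN]
    exact X_pow_dvd_iff.mpr fun d hd =>
      (b.coeff_coordPoly _ ⟨d, by omega⟩).trans (h _ (show 2 * d < n by omega))

end Exp

end Module.Basis

/-- Lemma 2.3 of the paper: in a finite-dimensional irreducible representation `W` of an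
`sl₂`-triple `(X, H, Y)`, if `v ≠ 0` lies in the sum `W⁻` of the strictly negative
eigenspaces of `H`, and `π₊` is the projection onto the sum of the strictly positive
eigenspaces of `H` parallel to the eigenspaces of `H`, then `π₊(exp(X) v) ≠ 0`. -/
theorem sl2_exp_pos_projection_ne_zero
    {W : Type*} [AddCommGroup W] [Module ℝ W] [FiniteDimensional ℝ W]
    (X H Y : Module.End ℝ W)
    (hXY : ⁅X, Y⁆ = H) (hHX : ⁅H, X⁆ = 2 • X) (hHY : ⁅H, Y⁆ = -(2 • Y))
    (hirr : ∀ p : Submodule ℝ W, (∀ w ∈ p, X w ∈ p) → (∀ w ∈ p, H w ∈ p) →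
      (∀ w ∈ p, Y w ∈ p) → p = ⊥ ∨ p = ⊤)
    (πpos : W →ₗ[ℝ] W)
    (hπpos : ∀ μ : ℝ, 0 < μ → ∀ w ∈ Module.End.eigenspace H μ, πpos w = w)
    (hπnonpos : ∀ μ : ℝ, μ ≤ 0 → ∀ w ∈ Module.End.eigenspace H μ, πpos w = 0)
    (v : W) (hv : v ∈ ⨆ μ ∈ Set.Iio (0 : ℝ), Module.End.eigenspace H μ) (hv0 : v ≠ 0) :
    πpos (expNil (Module.finrank ℝ W + 1) X v) ≠ 0 := by
  obtain ⟨μ, hμ, hμH⟩ := Module.End.exists_hasEigenvalue_of_mem_iSup_eigenspace hv hv0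
  let _ := LieRing.ofAssociativeRing (A := Module.End ℝ W)
  have t : IsSl2Triple H X Y := ⟨hμH.ne_zero (ne_of_lt hμ), hXY, hHX, hHY⟩
  obtain ⟨n, b, hbH, hbX₀, hbX⟩ := t.exists_basis_of_hasEigenvalue hirr hμH
  have hN : n < Module.finrank ℝ W + 1 := by simp [Module.finrank_eq_card_basis b]
  obtain ⟨i, hi, hne⟩ := b.exists_repr_expNil_ne_zero hbX₀ hbX hN hv0 fun i hi =>
    b.repr_eq_zero_of_mem_iSup_eigenspace hbH hv
      (not_lt.mpr (sub_nonneg.mpr (by exact_mod_cast hi : 2 * ((i : ℕ) : ℝ) ≤ n)))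
  have hπb : ∀ j, πpos (b j) = (if 0 < (n : ℝ) - 2 * j then (1 : ℝ) else 0) • b j := fun j => by
    have hbj := Module.End.mem_eigenspace_iff.mpr (hbH j)
    split_ifs with h
    · simpa using hπpos _ h _ hbj
    · simpa using hπnonpos _ (not_lt.mp h) _ hbj
  intro hπ
  have := b.repr_apply_of_apply_eq_smul hπb (expNil (Module.finrank ℝ W + 1) X v) i
  rw [hπ, map_zero, Finsupp.zero_apply, if_pos (sub_pos.mpr (by exact_mod_cast hi)), one_mul]
    at this
  exact hne this.symm
end

section
/- Let x_i → x in ℝ^{n−1}, v ∈ V with u(x_i)v ∈ V⁰ + V⁻ for all i, and δ_i → 0 a sequence of nonzero reals such that f = lim (x_i − x)/δ_i exists. Then u(f) stabilizes π₀(u(x)v), i.e. u(f)·π₀(u(x)v) = π₀(u(x)v). -/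
/-! Write `w = u(x) v`. Conjugating by `a_t` with `e^{(m+1)t} = δ_i⁻¹` gives
`a_t u(x_i) v = u((x_i - x) / δ_i) · a_t w`. On the closed subspace `V⁰ + V⁻`, which contains
every `u(x_i) v` and hence `w`, `a_t` converges pointwise to `π₀` as `t → ∞`, and in finite
dimension pointwise convergence of linear maps is joint in the argument. Hence the left side tends
to `π₀ w` and the right side to `u(f) π₀ w`. This needs `δ_i > 0`; if infinitely many `δ_i` are
negative, run the argument along those indices with `-δ_i`, `-f` and invert `u(-f)`. -/

noncomputable section

open Matrix

/-- `X(ξ)`: first row `(0, ξ)`, zeros elsewhere. -/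
def Xmat (m : ℕ) (ξ : Fin m → ℝ) : Matrix (Fin (m + 1)) (Fin (m + 1)) ℝ :=
  Matrix.of (Fin.cons (Fin.cons 0 ξ) 0)

/-- `u(ξ)`: unipotent matrix with `1`s on the diagonal and first row `(1, ξ)`. -/
def uMat (m : ℕ) (ξ : Fin m → ℝ) : Matrix (Fin (m + 1)) (Fin (m + 1)) ℝ :=
  1 + Xmat m ξ

lemma Xmat_apply_succ (m : ℕ) (ξ : Fin m → ℝ) (i : Fin m) (j : Fin (m + 1)) :
    Xmat m ξ i.succ j = 0 := by
  simp [Xmat]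

lemma uMat_det (m : ℕ) (ξ : Fin m → ℝ) : (uMat m ξ).det = 1 := by
  have h : (uMat m ξ).BlockTriangular id := by
    intro i j hij
    have hi : i ≠ 0 := by
      rintro rfl; exact Fin.not_lt_zero j hij
    obtain ⟨i', rfl⟩ := Fin.eq_succ_of_ne_zero hi
    have hne : (i'.succ : Fin (m+1)) ≠ j := by
      intro h; subst h; exact lt_irrefl _ hij
    simp [uMat, Matrix.one_apply, hne, Xmat_apply_succ]
  rw [Matrix.det_of_upperTriangular h]
  have : ∀ i, uMat m ξ i i = 1 := by
    intro i
    rcases Fin.eq_zero_or_eq_succ i with rfl | ⟨i', rfl⟩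
    · simp [uMat, Xmat, Matrix.one_apply]
    · simp [uMat, Matrix.one_apply, Xmat_apply_succ]
  simp [this]

/-- `u(ξ)` as an element of `SL(n, ℝ)`. -/
def uSL (m : ℕ) (ξ : Fin m → ℝ) : Matrix.SpecialLinearGroup (Fin (m + 1)) ℝ :=
  ⟨uMat m ξ, uMat_det m ξ⟩

/-- The diagonal matrix `a_t = diag(e^{(n-1)t}, e^{-t}, …, e^{-t})`. -/
def aMat (m : ℕ) (t : ℝ) : Matrix (Fin (m + 1)) (Fin (m + 1)) ℝ :=
  Matrix.diagonal (Fin.cons (Real.exp (m * t)) fun _ => Real.exp (-t))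

lemma aMat_det (m : ℕ) (t : ℝ) : (aMat m t).det = 1 := by
  rw [aMat, Matrix.det_diagonal, Fin.prod_cons]
  simp only [Finset.prod_const, Finset.card_univ, Fintype.card_fin]
  rw [← Real.exp_nat_mul, ← Real.exp_add]
  ring_nf
  exact Real.exp_zero

/-- `a_t` as an element of `SL(n, ℝ)`. -/
def aSL (m : ℕ) (t : ℝ) : Matrix.SpecialLinearGroup (Fin (m + 1)) ℝ :=
  ⟨aMat m t, aMat_det m t⟩

/-- Topology on `SL(n, ℝ)`, induced from the space of matrices. -/
instance SLtop (m : ℕ) : TopologicalSpace (Matrix.SpecialLinearGroup (Fin (m + 1)) ℝ) :=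
  TopologicalSpace.induced
    (fun g => (g : Matrix (Fin (m + 1)) (Fin (m + 1)) ℝ)) inferInstance

variable {V : Type*} [AddCommGroup V] [Module ℝ V]

/-- The weight space `V^μ` of the one-parameter diagonal group `{a_t}` acting through
the representation `ρ`: the set of `v` with `ρ(a_t) v = e^{μ t} v` for all `t`. -/
def wtSpace (m : ℕ)
    (ρ : Matrix.SpecialLinearGroup (Fin (m + 1)) ℝ →* Module.End ℝ V) (μ : ℝ) :
    Submodule ℝ V :=
  ⨅ t : ℝ, Module.End.eigenspace (ρ (aSL m t)) (Real.exp (μ * t))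

open Filter Topology

lemma Xmat_mul_Xmat (m : ℕ) (ξ η : Fin m → ℝ) : Xmat m ξ * Xmat m η = 0 := by
  ext i j
  cases i using Fin.cases
  · simp [Xmat, Matrix.mul_apply, Fin.sum_univ_succ]
  · simp [Xmat, Matrix.mul_apply]

lemma Xmat_add (m : ℕ) (ξ η : Fin m → ℝ) : Xmat m (ξ + η) = Xmat m ξ + Xmat m η := by
  ext i j
  cases i using Fin.cases <;> cases j using Fin.cases <;> simp [Xmat]

lemma uMat_add (m : ℕ) (ξ η : Fin m → ℝ) : uMat m (ξ + η) = uMat m ξ * uMat m η := by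
  simp only [uMat, add_mul, mul_add, one_mul, mul_one, Xmat_mul_Xmat, Xmat_add]
  abel

lemma uMat_zero (m : ℕ) : uMat m 0 = 1 := by
  ext i j
  cases i using Fin.cases <;> cases j using Fin.cases <;> simp [uMat, Xmat]

lemma aMat_mul_uMat (m : ℕ) (t : ℝ) (ξ : Fin m → ℝ) :
    aMat m t * uMat m ξ = uMat m (Real.exp ((m + 1) * t) • ξ) * aMat m t := by
  ext i j
  rw [aMat, Matrix.diagonal_mul, Matrix.mul_diagonal]
  cases i using Fin.cases <;> cases j using Fin.cases
  · simp [uMat, Xmat]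
  · simp only [uMat, Xmat, Matrix.add_apply, Matrix.one_apply, Matrix.of_apply, Fin.cons_zero,
      Fin.cons_succ, Pi.smul_apply, smul_eq_mul, (Fin.succ_ne_zero _).symm, if_false, zero_add]
    rw [mul_right_comm, ← Real.exp_add]
    ring_nf
  · simp [uMat, Xmat]
  · simp [uMat, Xmat, Matrix.one_apply]

lemma uSL_add (m : ℕ) (ξ η : Fin m → ℝ) : uSL m (ξ + η) = uSL m ξ * uSL m η :=
  Subtype.ext (uMat_add m ξ η)

lemma uSL_zero (m : ℕ) : uSL m 0 = 1 :=
  Subtype.ext (uMat_zero m)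

lemma aSL_mul_uSL (m : ℕ) (t : ℝ) (ξ : Fin m → ℝ) :
    aSL m t * uSL m ξ = uSL m (Real.exp ((m + 1) * t) • ξ) * aSL m t :=
  Subtype.ext (aMat_mul_uMat m t ξ)

lemma continuous_uSL (m : ℕ) : Continuous (uSL m) := by
  rw [continuous_induced_rng]
  show Continuous fun ξ => 1 + Matrix.of (Fin.cons (Fin.cons 0 ξ) 0)
  fun_prop

lemma exists_tendsto_atTop_exp_mul_eq_inv {ι : Type*} {l : Filter ι} {s : ι → ℝ}
    (hs : Tendsto s l (𝓝[>] 0)) {c : ℝ} (hc : 0 < c) :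
    ∃ t : ι → ℝ, Tendsto t l atTop ∧ ∀ᶠ i in l, Real.exp (c * t i) = (s i)⁻¹ := by
  refine ⟨fun i => -Real.log (s i) / c, ?_, ?_⟩
  · exact (tendsto_neg_atBot_atTop.comp (Real.tendsto_log_nhdsGT_zero.comp hs)).atTop_div_const hc
  · filter_upwards [hs self_mem_nhdsWithin] with i (hi : 0 < s i)
    rw [mul_div_cancel₀ _ hc.ne', Real.exp_neg, Real.exp_log hi]

section LinearMapConvergence

variable {ι 𝕜 E F : Type*}

def LinearMap.tendstoLocus [Semiring 𝕜] [AddCommMonoid E] [Module 𝕜 E] [AddCommMonoid F]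
    [Module 𝕜 F] [TopologicalSpace F] [ContinuousAdd F] [ContinuousConstSMul 𝕜 F]
    (l : Filter ι) (L : ι → E →ₗ[𝕜] F) (L₀ : E →ₗ[𝕜] F) : Submodule 𝕜 E where
  carrier := {e | Tendsto (fun i => L i e) l (𝓝 (L₀ e))}
  zero_mem' := by simpa using tendsto_const_nhds
  add_mem' ha hb := by simpa using ha.add hb
  smul_mem' c _ he := by simpa using he.const_smul c

theorem LinearMap.tendsto_apply_of_forall_tendsto [NontriviallyNormedField 𝕜] [CompleteSpace 𝕜]
    [NormedAddCommGroup E] [NormedSpace 𝕜 E] [FiniteDimensional 𝕜 E] [AddCommMonoid F]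
    [Module 𝕜 F] [TopologicalSpace F] [ContinuousAdd F] [ContinuousSMul 𝕜 F]
    {l : Filter ι} {L : ι → E →ₗ[𝕜] F} {L₀ : E →ₗ[𝕜] F}
    (hL : ∀ e, Tendsto (fun i => L i e) l (𝓝 (L₀ e)))
    {x : ι → E} {x₀ : E} (hx : Tendsto x l (𝓝 x₀)) :
    Tendsto (fun i => L i (x i)) l (𝓝 (L₀ x₀)) := by
  let b := Module.finBasis 𝕜 E
  have expand (M : E →ₗ[𝕜] F) (y : E) : M y = ∑ j, b.repr y j • M (b j) := by
    conv_lhs => rw [← b.sum_repr y, map_sum]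
    simp only [map_smul]
  rw [expand L₀ x₀]
  refine Tendsto.congr (fun i => (expand (L i) (x i)).symm) ?_
  refine tendsto_finsetSum _ fun j _ => Tendsto.smul ?_ (hL _)
  exact ((b.coord j).continuous_of_finiteDimensional.tendsto x₀).comp hx

end LinearMapConvergence

section Contraction

variable {m : ℕ} {V : Type*} [NormedAddCommGroup V] [NormedSpace ℝ V]
  {ρ : Matrix.SpecialLinearGroup (Fin (m + 1)) ℝ →* Module.End ℝ V} {π₀ : V →ₗ[ℝ] V}
  {ι : Type*} {l : Filter ι}

/-- `V⁰ + V⁻` in the paper's notation. -/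
def wtSpaceNonpos (m : ℕ) (ρ : Matrix.SpecialLinearGroup (Fin (m + 1)) ℝ →* Module.End ℝ V) :
    Submodule ℝ V :=
  wtSpace m ρ 0 ⊔ ⨆ μ ∈ Set.Iio (0 : ℝ), wtSpace m ρ μ

lemma mem_wtSpace_iff {μ : ℝ} {v : V} :
    v ∈ wtSpace m ρ μ ↔ ∀ t, ρ (aSL m t) v = Real.exp (μ * t) • v := by
  simp [wtSpace, Submodule.mem_iInf]

lemma wtSpace_le_tendstoLocus (hπ₀ : ∀ w ∈ wtSpace m ρ 0, π₀ w = w)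
    (hπ : ∀ μ : ℝ, μ ≠ 0 → ∀ w ∈ wtSpace m ρ μ, π₀ w = 0) {μ : ℝ} (hμ : μ ≤ 0)
    {t : ι → ℝ} (ht : Tendsto t l atTop) :
    wtSpace m ρ μ ≤ LinearMap.tendstoLocus l (fun i => ρ (aSL m (t i))) π₀ := by
  intro v hv
  show Tendsto _ _ _
  simp only [mem_wtSpace_iff.1 hv]
  rcases hμ.lt_or_eq with hμ | rfl
  · rw [hπ μ hμ.ne v hv]
    simpa using (Real.tendsto_exp_atBot.comp (ht.const_mul_atTop_of_neg hμ)).smul_const v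
  · simpa [hπ₀ v hv] using tendsto_const_nhds

lemma wtSpaceNonpos_le_tendstoLocus (hπ₀ : ∀ w ∈ wtSpace m ρ 0, π₀ w = w)
    (hπ : ∀ μ : ℝ, μ ≠ 0 → ∀ w ∈ wtSpace m ρ μ, π₀ w = 0)
    {t : ι → ℝ} (ht : Tendsto t l atTop) :
    wtSpaceNonpos m ρ ≤ LinearMap.tendstoLocus l (fun i => ρ (aSL m (t i))) π₀ :=
  sup_le (wtSpace_le_tendstoLocus hπ₀ hπ le_rfl ht)
    (iSup₂_le fun _ hμ => wtSpace_le_tendstoLocus hπ₀ hπ (le_of_lt hμ) ht)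

theorem tendsto_rho_aSL_apply [FiniteDimensional ℝ V] (hπ₀ : ∀ w ∈ wtSpace m ρ 0, π₀ w = w)
    (hπ : ∀ μ : ℝ, μ ≠ 0 → ∀ w ∈ wtSpace m ρ μ, π₀ w = 0)
    {t : ι → ℝ} (ht : Tendsto t l atTop) {ω : ι → V} {w : V}
    (hωW : ∀ i, ω i ∈ wtSpaceNonpos m ρ) (hwW : w ∈ wtSpaceNonpos m ρ)
    (hω : Tendsto ω l (𝓝 w)) :
    Tendsto (fun i => ρ (aSL m (t i)) (ω i)) l (𝓝 (π₀ w)) :=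
  LinearMap.tendsto_apply_of_forall_tendsto
    (L := fun i => (ρ (aSL m (t i))).comp (wtSpaceNonpos m ρ).subtype)
    (L₀ := π₀.comp (wtSpaceNonpos m ρ).subtype)
    (fun e => wtSpaceNonpos_le_tendstoLocus hπ₀ hπ ht e.2)
    (x := fun i => ⟨ω i, hωW i⟩) (x₀ := ⟨w, hwW⟩) (tendsto_subtype_rng.2 hω)

theorem rho_uSL_pi0_eq_of_tendsto [FiniteDimensional ℝ V]
    (hcont : ∀ v : V, Continuous fun g => ρ g v)
    (hπ₀ : ∀ w ∈ wtSpace m ρ 0, π₀ w = w)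
    (hπ : ∀ μ : ℝ, μ ≠ 0 → ∀ w ∈ wtSpace m ρ μ, π₀ w = 0) [l.NeBot]
    {x : ι → Fin m → ℝ} {x₀ : Fin m → ℝ} (hx : Tendsto x l (𝓝 x₀))
    {v : V} (hneg : ∀ i, ρ (uSL m (x i)) v ∈ wtSpaceNonpos m ρ)
    {s : ι → ℝ} (hs : Tendsto s l (𝓝[>] 0))
    {g : Fin m → ℝ} (hg : Tendsto (fun i => (s i)⁻¹ • (x i - x₀)) l (𝓝 g)) :
    ρ (uSL m g) (π₀ (ρ (uSL m x₀) v)) = π₀ (ρ (uSL m x₀) v) := by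
  set w := ρ (uSL m x₀) v
  have hω : Tendsto (fun i => ρ (uSL m (x i)) v) l (𝓝 w) :=
    ((hcont v).tendsto _).comp (((continuous_uSL m).tendsto x₀).comp hx)
  have hwW : w ∈ wtSpaceNonpos m ρ :=
    (wtSpaceNonpos m ρ).closed_of_finiteDimensional.mem_of_tendsto hω (.of_forall hneg)
  obtain ⟨t, ht, hexp⟩ := exists_tendsto_atTop_exp_mul_eq_inv hs (c := (m : ℝ) + 1) (by positivity)
  set ξ := fun i => Real.exp ((m + 1) * t i) • (x i - x₀)
  have hconj (i : ι) :
      ρ (aSL m (t i)) (ρ (uSL m (x i)) v) = ρ (uSL m (ξ i)) (ρ (aSL m (t i)) w) := by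
    simp only [w, ξ, ← Module.End.mul_apply, ← map_mul, ← mul_assoc, ← aSL_mul_uSL]
    rw [mul_assoc, ← uSL_add, sub_add_cancel]
  have hξ : Tendsto (fun i => uSL m (ξ i)) l (𝓝 (uSL m g)) :=
    ((continuous_uSL m).tendsto g).comp (hg.congr' (hexp.mono fun i hi => by simp only [ξ, hi]))
  have hLHS := tendsto_rho_aSL_apply hπ₀ hπ ht hneg hwW hω
  have hRHS : Tendsto (fun i => ρ (uSL m (ξ i)) (ρ (aSL m (t i)) w)) l
      (𝓝 (ρ (uSL m g) (π₀ w))) :=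
    LinearMap.tendsto_apply_of_forall_tendsto (fun e => ((hcont e).tendsto _).comp hξ)
      (tendsto_rho_aSL_apply hπ₀ hπ ht (fun _ => hwW) hwW tendsto_const_nhds)
  exact tendsto_nhds_unique (hRHS.congr fun i => (hconj i).symm) hLHS

theorem rho_uSL_pi0_eq_of_frequently_pos [FiniteDimensional ℝ V]
    (hcont : ∀ v : V, Continuous fun g => ρ g v)
    (hπ₀ : ∀ w ∈ wtSpace m ρ 0, π₀ w = w)
    (hπ : ∀ μ : ℝ, μ ≠ 0 → ∀ w ∈ wtSpace m ρ μ, π₀ w = 0)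
    {x : ι → Fin m → ℝ} {x₀ : Fin m → ℝ} (hx : Tendsto x l (𝓝 x₀))
    {v : V} (hneg : ∀ i, ρ (uSL m (x i)) v ∈ wtSpaceNonpos m ρ)
    {s : ι → ℝ} (hpos : ∃ᶠ i in l, 0 < s i) (hs : Tendsto s l (𝓝 0))
    {g : Fin m → ℝ} (hg : Tendsto (fun i => (s i)⁻¹ • (x i - x₀)) l (𝓝 g)) :
    ρ (uSL m g) (π₀ (ρ (uSL m x₀) v)) = π₀ (ρ (uSL m x₀) v) := by
  have := frequently_iff_neBot.1 hpos
  have hle : l ⊓ 𝓟 {i | 0 < s i} ≤ l := inf_le_left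
  exact rho_uSL_pi0_eq_of_tendsto hcont hπ₀ hπ (hx.mono_left hle) hneg
    (tendsto_nhdsWithin_iff.2
      ⟨hs.mono_left hle, eventually_inf_principal.2 (.of_forall fun _ => id)⟩)
    (hg.mono_left hle)

end Contraction

open Filter Topology in
theorem uf_stabilizes_pi0_general {m : ℕ}
    {V : Type*} [NormedAddCommGroup V] [NormedSpace ℝ V] [FiniteDimensional ℝ V]
    (ρ : Matrix.SpecialLinearGroup (Fin (m + 1)) ℝ →* Module.End ℝ V)
    (hcont : ∀ v : V, Continuous fun g => ρ g v)
    (π₀ : V →ₗ[ℝ] V)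
    (hπ₀ : ∀ w ∈ wtSpace m ρ 0, π₀ w = w)
    (hπ : ∀ μ : ℝ, μ ≠ 0 → ∀ w ∈ wtSpace m ρ μ, π₀ w = 0)
    (x : ℕ → Fin m → ℝ) (x₀ : Fin m → ℝ)
    (hx : Tendsto x atTop (𝓝 x₀))
    (v : V)
    (hneg : ∀ i : ℕ,
      ρ (uSL m (x i)) v ∈ wtSpace m ρ 0 ⊔ ⨆ μ ∈ Set.Iio (0 : ℝ), wtSpace m ρ μ)
    (δ : ℕ → ℝ) (hδ0 : ∀ i, δ i ≠ 0) (hδ : Tendsto δ atTop (𝓝 0))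
    (f : Fin m → ℝ)
    (hf : Tendsto (fun i => (δ i)⁻¹ • (x i - x₀)) atTop (𝓝 f)) :
    ρ (uSL m f) (π₀ (ρ (uSL m x₀) v)) = π₀ (ρ (uSL m x₀) v) := by
  have hsign : (∃ᶠ i in atTop, 0 < δ i) ∨ ∃ᶠ i in atTop, 0 < -δ i := by
    simp only [← frequently_or_distrib, neg_pos]
    exact .of_forall fun i => (hδ0 i).lt_or_gt.symm
  rcases hsign with hpos | hneg_pos
  · exact rho_uSL_pi0_eq_of_frequently_pos hcont hπ₀ hπ hx hneg hpos hδ hf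
  · have hfix := rho_uSL_pi0_eq_of_frequently_pos hcont hπ₀ hπ hx hneg hneg_pos
      (by simpa using hδ.neg) (g := -f) (by simpa [inv_neg, neg_smul] using hf.neg)
    calc ρ (uSL m f) (π₀ (ρ (uSL m x₀) v))
        = ρ (uSL m f) (ρ (uSL m (-f)) (π₀ (ρ (uSL m x₀) v))) := by rw [hfix]
      _ = π₀ (ρ (uSL m x₀) v) := by
        rw [← Module.End.mul_apply, ← map_mul, ← uSL_add, add_neg_cancel, uSL_zero, map_one,
          Module.End.one_apply]

open Filter Topology in
/-- Lemma 4.5 (lema:accu) of the paper. Let `x_i → x` in `ℝ^{n-1}`, let `v ∈ V`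
satisfy `u(x_i) v ∈ V⁰ + V⁻` for all `i`, and let `δ_i → 0` be nonzero reals such
that `f = lim (x_i - x)/δ_i` exists. Then `u(f)` stabilizes `π₀(u(x) v)`. -/
theorem uf_stabilizes_pi0 {m : ℕ} (hm : 1 ≤ m)
    {V : Type*} [NormedAddCommGroup V] [NormedSpace ℝ V] [FiniteDimensional ℝ V]
    (ρ : Matrix.SpecialLinearGroup (Fin (m + 1)) ℝ →* Module.End ℝ V)
    (hcont : ∀ v : V, Continuous fun g => ρ g v)
    (hss : (⨆ μ : ℝ, wtSpace m ρ μ) = ⊤)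
    (π₀ : V →ₗ[ℝ] V)
    (hπ₀ : ∀ w ∈ wtSpace m ρ 0, π₀ w = w)
    (hπ : ∀ μ : ℝ, μ ≠ 0 → ∀ w ∈ wtSpace m ρ μ, π₀ w = 0)
    (x : ℕ → Fin m → ℝ) (x₀ : Fin m → ℝ)
    (hx : Tendsto x atTop (𝓝 x₀))
    (v : V)
    (hneg : ∀ i : ℕ,
      ρ (uSL m (x i)) v ∈ wtSpace m ρ 0 ⊔ ⨆ μ ∈ Set.Iio (0 : ℝ), wtSpace m ρ μ)
    (δ : ℕ → ℝ) (hδ0 : ∀ i, δ i ≠ 0) (hδ : Tendsto δ atTop (𝓝 0))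
    (f : Fin m → ℝ)
    (hf : Tendsto (fun i => (δ i)⁻¹ • (x i - x₀)) atTop (𝓝 f)) :
    ρ (uSL m f) (π₀ (ρ (uSL m x₀) v)) = π₀ (ρ (uSL m x₀) v) :=
  uf_stabilizes_pi0_general ρ hcont π₀ hπ₀ hπ x x₀ hx v hneg δ hδ0 hδ f hf
end
end

section
/- Let D be the diagonal subgroup of SL(n,ℝ) and let x = (x₂,…,x_{n−1}) have all coordinates nonzero. Let w(x) be the unipotent matrix with 1's on the diagonal and entries x_j in position (2, j+1) for 2 ≤ j ≤ n−1. Then the subgroup generated by D and w(x)^{−1} D w(x) contains the full group W = {w(y) : y ∈ ℝ^{n−2}}. -/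
noncomputable section

open Matrix

/-- The strictly upper-triangular matrix with entries `x₁, …, x_{n-2}` in row `2`
(index `1`), columns `3, …, n` (indices `2, …, n-1`), and zeros elsewhere. -/
def Emat (k : ℕ) (x : Fin k → ℝ) : Matrix (Fin (k + 2)) (Fin (k + 2)) ℝ :=
  ∑ j : Fin k, Matrix.single 1 j.succ.succ (x j)

/-- The unipotent matrix `w(x)` of equation (eq:8) of the paper: `1`s on the
diagonal, entries `x` in the second row (columns `3` through `n`), zeros elsewhere. -/
def wMat (k : ℕ) (x : Fin k → ℝ) : Matrix (Fin (k + 2)) (Fin (k + 2)) ℝ :=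
  1 + Emat k x

lemma Emat_apply_eq_zero_of_lt (k : ℕ) (x : Fin k → ℝ) {i j : Fin (k + 2)}
    (hij : j < i) : Emat k x i j = 0 := by
  rw [Emat]
  simp only [Matrix.sum_apply]
  refine Finset.sum_eq_zero fun l _ => ?_
  rw [Matrix.single]
  simp only [Matrix.of_apply]
  rcases eq_or_ne (1 : Fin (k+2)) i with hi | hi
  · have : l.succ.succ ≠ j := by
      intro h
      subst h
      rw [← hi] at hij
      have : (l.succ.succ : Fin (k+2)).val < 1 := hij
      simp [Fin.val_succ] at this
    simp [this]
  · simp [hi]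

lemma wMat_det (k : ℕ) (x : Fin k → ℝ) : (wMat k x).det = 1 := by
  have h : (wMat k x).BlockTriangular id := by
    intro i j hij
    have hij' : j < i := hij
    have hne : i ≠ j := ne_of_gt hij'
    simp [wMat, Matrix.one_apply, hne, Emat_apply_eq_zero_of_lt k x hij']
  rw [Matrix.det_of_upperTriangular h]
  have : ∀ i, wMat k x i i = 1 := by
    intro i
    have : Emat k x i i = 0 := by
      rw [Emat]
      simp only [Matrix.sum_apply]
      refine Finset.sum_eq_zero fun l _ => ?_
      rw [Matrix.single]
      simp only [Matrix.of_apply]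
      rcases eq_or_ne (1 : Fin (k+2)) i with hi | hi
      · have : l.succ.succ ≠ i := by
          rw [← hi]
          intro h
          have := congrArg Fin.val h
          simp [Fin.val_succ] at this
        simp [this]
      · simp [hi]
    simp [wMat, Matrix.one_apply, this]
  simp [this]

/-- `w(x)` as an element of `SL(n, ℝ)`. -/
def wSL (k : ℕ) (x : Fin k → ℝ) : Matrix.SpecialLinearGroup (Fin (k + 2)) ℝ :=
  ⟨wMat k x, wMat_det k x⟩

/-!
Conjugation by `d = diag(d₀, …, d_{n-1})` maps `w(x)` to `w(d₁ x_j / d_{j+2})`, and `w` is a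
homomorphism from `(ℝ^{n-2}, +)`. Hence the commutator `w(x)⁻¹ d w(x) d⁻¹ = w(-x) w(d₁ x_j / d_{j+2})`
is `w(y)` for every `y` with `x_j + y_j ≠ 0` for all `j` (as `x_j ≠ 0`, the ratio
`(x_j + y_j) / x_j` is then a nonzero real, realised as `d₁ / d_{j+2}`). Every `y` is the sum of
two such vectors.
-/

lemma Matrix.diagonal_mul_single {n α : Type*} [Fintype n] [DecidableEq n] [Semiring α]
    (d : n → α) (i j : n) (c : α) : diagonal d * single i j c = single i j (d i * c) := by
  ext a b
  by_cases ha : i = a <;> simp [Matrix.diagonal_mul, single_apply, ha]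

lemma Matrix.single_mul_diagonal {n α : Type*} [Fintype n] [DecidableEq n] [Semiring α]
    (d : n → α) (i j : n) (c : α) : single i j c * diagonal d = single i j (c * d j) := by
  ext a b
  by_cases hb : j = b <;> simp [Matrix.mul_diagonal, single_apply, hb]

section Emat

variable {k : ℕ}

lemma Emat_add (x y : Fin k → ℝ) : Emat k (x + y) = Emat k x + Emat k y := by
  simp only [Emat, Pi.add_apply, single_add, Finset.sum_add_distrib]

lemma Emat_mul_Emat (x y : Fin k → ℝ) : Emat k x * Emat k y = 0 := by
  rw [Emat, Emat, Finset.sum_mul_sum]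
  refine Finset.sum_eq_zero fun i _ => Finset.sum_eq_zero fun j _ => ?_
  refine single_mul_single_of_ne _ _ _ _ (fun h => ?_) _
  simp [Fin.ext_iff] at h

lemma diagonal_mul_Emat (d : Fin (k + 2) → ℝ) (x : Fin k → ℝ) :
    diagonal d * Emat k x = Emat k (fun j => d 1 * x j) := by
  simp only [Emat, Finset.mul_sum, diagonal_mul_single]

lemma Emat_mul_diagonal (d : Fin (k + 2) → ℝ) (x : Fin k → ℝ) :
    Emat k x * diagonal d = Emat k (fun j => x j * d j.succ.succ) := by
  simp only [Emat, Finset.sum_mul, single_mul_diagonal]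

end Emat

section wMat

variable {k : ℕ}

lemma wMat_mul (x y : Fin k → ℝ) : wMat k x * wMat k y = wMat k (x + y) := by
  simp only [wMat, add_mul, mul_add, one_mul, mul_one, Emat_mul_Emat, Emat_add]
  abel

lemma wSL_mul (x y : Fin k → ℝ) : wSL k x * wSL k y = wSL k (x + y) :=
  Subtype.ext (wMat_mul x y)

lemma diagonal_mul_wMat {d : Fin (k + 2) → ℝ} {x x' : Fin k → ℝ}
    (h : ∀ j, d 1 * x j = x' j * d j.succ.succ) :
    diagonal d * wMat k x = wMat k x' * diagonal d := by
  simp only [wMat, mul_add, add_mul, mul_one, one_mul, diagonal_mul_Emat, Emat_mul_diagonal]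
  congr 2
  exact funext h

end wMat

section generators

variable {k : ℕ}

/-- `diag((∏ r)⁻¹, 1, r₀, …, r_{k-1})`: conjugating `w(x)` by it divides `x j` by `r j`. -/
def diagVec (r : Fin k → ℝ) : Fin (k + 2) → ℝ :=
  Fin.cons (∏ j, r j)⁻¹ (Fin.cons 1 r)

lemma det_diagonal_diagVec {r : Fin k → ℝ} (hr : ∀ j, r j ≠ 0) :
    (diagonal (diagVec r)).det = 1 := by
  rw [det_diagonal, diagVec, Fin.prod_cons, Fin.prod_cons, one_mul,
    inv_mul_cancel₀ (Finset.prod_ne_zero_iff.2 fun j _ => hr j)]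

def diagSL {r : Fin k → ℝ} (hr : ∀ j, r j ≠ 0) : SpecialLinearGroup (Fin (k + 2)) ℝ :=
  ⟨diagonal (diagVec r), det_diagonal_diagVec hr⟩

lemma conj_diagSL_mul_inv {x y r : Fin k → ℝ} (hr : ∀ j, r j ≠ 0)
    (h : ∀ j, x j = (x j + y j) * r j) :
    (wSL k x)⁻¹ * diagSL hr * wSL k x * (diagSL hr)⁻¹ = wSL k y := by
  rw [mul_inv_eq_iff_eq_mul, mul_assoc, inv_mul_eq_iff_eq_mul, ← mul_assoc, wSL_mul]
  refine Subtype.ext (diagonal_mul_wMat fun j => ?_)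
  simpa [diagVec] using h j

variable (k) in
def diagonalSet : Set (SpecialLinearGroup (Fin (k + 2)) ℝ) :=
  {g | ∃ d, (g : Matrix (Fin (k + 2)) (Fin (k + 2)) ℝ) = diagonal d}

lemma wSL_mem_closure {x y : Fin k → ℝ} (hx : ∀ j, x j ≠ 0) (hxy : ∀ j, x j + y j ≠ 0) :
    wSL k y ∈ Subgroup.closure
      (diagonalSet k ∪ (fun g => (wSL k x)⁻¹ * g * wSL k x) '' diagonalSet k) := by
  have hr : ∀ j, x j / (x j + y j) ≠ 0 := fun j => div_ne_zero (hx j) (hxy j)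
  have hD : diagSL hr ∈ diagonalSet k := ⟨_, rfl⟩
  rw [← conj_diagSL_mul_inv hr fun j => (mul_div_cancel₀ _ (hxy j)).symm]
  exact mul_mem (Subgroup.subset_closure (.inr ⟨_, hD, rfl⟩))
    (inv_mem (Subgroup.subset_closure (.inl hD)))

end generators

theorem W_subset_closure_D_conjD_general (k : ℕ)
    (x : Fin k → ℝ) (hx : ∀ j, x j ≠ 0) :
    {g : Matrix.SpecialLinearGroup (Fin (k + 2)) ℝ |
        ∃ y : Fin k → ℝ, (g : Matrix (Fin (k + 2)) (Fin (k + 2)) ℝ) = wMat k y} ⊆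
      Subgroup.closure
        ({g : Matrix.SpecialLinearGroup (Fin (k + 2)) ℝ |
            ∃ d : Fin (k + 2) → ℝ, (g : Matrix (Fin (k + 2)) (Fin (k + 2)) ℝ)
              = Matrix.diagonal d} ∪
          (fun g => (wSL k x)⁻¹ * g * wSL k x) ''
            {g : Matrix.SpecialLinearGroup (Fin (k + 2)) ℝ |
              ∃ d : Fin (k + 2) → ℝ, (g : Matrix (Fin (k + 2)) (Fin (k + 2)) ℝ)
                = Matrix.diagonal d}) := by
  rintro g ⟨y, hy⟩
  obtain rfl : g = wSL k y := Subtype.ext hy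
  choose z hz using fun j => Infinite.exists_notMem_finset ({-x j, y j + x j} : Finset ℝ)
  have hz₁ : ∀ j, x j + z j ≠ 0 := fun j h => hz j (by simp [eq_neg_of_add_eq_zero_right h])
  have hz₂ : ∀ j, x j + (y - z) j ≠ 0 := fun j h => by
    rw [Pi.sub_apply] at h
    exact hz j (by simp [show z j = y j + x j by linarith])
  rw [show y = (y - z) + z by abel, ← wSL_mul]
  exact mul_mem (wSL_mem_closure hx hz₂) (wSL_mem_closure hx hz₁)

/-- Step in the proof of Corollary (cor:curve): if `x = (x₂, …, x_{n-1})` has all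
coordinates nonzero, then the subgroup of `SL(n, ℝ)` generated by the diagonal
subgroup `D` and by `w(x)⁻¹ D w(x)` contains the full group `W = {w(y)}`. -/
theorem W_subset_closure_D_conjD (k : ℕ) (hk : 1 ≤ k)
    (x : Fin k → ℝ) (hx : ∀ j, x j ≠ 0) :
    {g : Matrix.SpecialLinearGroup (Fin (k + 2)) ℝ |
        ∃ y : Fin k → ℝ, (g : Matrix (Fin (k + 2)) (Fin (k + 2)) ℝ) = wMat k y} ⊆
      Subgroup.closure
        ({g : Matrix.SpecialLinearGroup (Fin (k + 2)) ℝ |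
            ∃ d : Fin (k + 2) → ℝ, (g : Matrix (Fin (k + 2)) (Fin (k + 2)) ℝ)
              = Matrix.diagonal d} ∪
          (fun g => (wSL k x)⁻¹ * g * wSL k x) ''
            {g : Matrix.SpecialLinearGroup (Fin (k + 2)) ℝ |
              ∃ d : Fin (k + 2) → ℝ, (g : Matrix (Fin (k + 2)) (Fin (k + 2)) ℝ)
                = Matrix.diagonal d}) :=
  W_subset_closure_D_conjD_general k x hx
end
end
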